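/- In dimension 1, under Hypotheses 1–3: if u = T⁻[v] with v : ℝ → ℝ 1-periodic semiconcave, then the optimal forward map Σ₊[u] : ℝ → ℝ is a single-valued, continuous, non-decreasing function satisfying Σ₊[u](x+1) = Σ₊[u](x) + 1; i.e., it is a lift of a degree-one circle map. -/

import Mathlib

/-!
Since `v` is semiconcave and periodic it is continuous and bounded, so by coercivity the infimum
defining `u(w) = T⁻[v](w)` is attained at points `z` within a uniform distance of `w`; hence `u` is
continuous and periodic, and `z ↦ u z - S x z` attains its maximum. The non-crossing condition
makes maximizers non-decreasing in `x`. If `y₁ < y₂` were two maximizers for `x`, then for every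
`w` strictly between them every minimizer `z` for `w` (which has `w` as a maximizer) is squeezed
to `z = x`; at two such points `w₁ ≠ w₂` the semiconcavity of `v` forces
`∂₁S(x, w₁) = ∂₁S(x, w₂)`, contradicting the ferromagnetic condition. So the maximizer `σ x` is
unique; it is monotone, surjective (every `w` is the maximizer of its minimizers), hence continuous,
and it commutes with the translation by `1`.
-/

open Filter Topology

/-- The discrete backward Lax-Oleinik operator (dimension 1). -/
noncomputable def Tminus (S : ℝ → ℝ → ℝ) (u : ℝ → ℝ) : ℝ → ℝ :=
  fun y => ⨅ x, (u x + S x y)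

/-- The discrete forward Lax-Oleinik operator (dimension 1). -/
noncomputable def Tplus (S : ℝ → ℝ → ℝ) (u : ℝ → ℝ) : ℝ → ℝ :=
  fun x => ⨆ y, (u y - S x y)

/-- 1-periodicity. -/
def Periodic1 (u : ℝ → ℝ) : Prop := ∀ x, u (x + 1) = u x

/-- Coercivity: S(x,y) → +∞ as |x−y| → ∞. -/
def Coercive1 (S : ℝ → ℝ → ℝ) : Prop :=
  ∀ M : ℝ, ∃ R : ℝ, ∀ x y : ℝ, R ≤ |x - y| → M ≤ S x y

/-- Diagonal periodicity: S(x+m, y+m) = S(x,y) for m ∈ ℤ. -/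
def DiagPeriodic1 (S : ℝ → ℝ → ℝ) : Prop :=
  ∀ (m : ℤ) (x y : ℝ), S (x + m) (y + m) = S x y

/-- Semiconcavity with a linear modulus (dimension 1). -/
def Semiconcave1 (v : ℝ → ℝ) : Prop :=
  ∃ C : ℝ, 0 ≤ C ∧ ∀ x y θ : ℝ, θ ∈ Set.Icc (0:ℝ) 1 →
    θ * v x + (1 - θ) * v y - v (θ * x + (1 - θ) * y) ≤
      C / 2 * θ * (1 - θ) * |x - y| ^ 2

/-- Local semiconcavity (with linear modulus) on a normed space. -/
def LocallySemiconcave {E : Type*} [NormedAddCommGroup E] [NormedSpace ℝ E]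
    (f : E → ℝ) : Prop :=
  ∀ x : E, ∃ U ∈ 𝓝 x, Convex ℝ U ∧ ∃ C : ℝ, 0 ≤ C ∧
    ∀ y ∈ U, ∀ z ∈ U, ∀ θ : ℝ, θ ∈ Set.Icc (0:ℝ) 1 →
      θ * f y + (1 - θ) * f z - f (θ • y + (1 - θ) • z) ≤
        C / 2 * θ * (1 - θ) * ‖y - z‖ ^ 2

/-- The ferromagnetic property in dimension 1: S is C¹ and the maps
`y ↦ ∂₁S(x,y)` and `x ↦ ∂₂S(x,y)` are homeomorphisms of ℝ. -/
def Ferromagnetic1 (S : ℝ → ℝ → ℝ) : Prop :=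
  ContDiff ℝ 1 (fun p : ℝ × ℝ => S p.1 p.2) ∧
  (∀ x : ℝ, ∃ h : ℝ ≃ₜ ℝ, ∀ y, h y = deriv (fun t => S t y) x) ∧
  (∀ y : ℝ, ∃ h : ℝ ≃ₜ ℝ, ∀ x, h x = deriv (fun t => S x t) y)

/-- The Aubry–Le Daeron non-crossing condition. -/
def NonCrossing (S : ℝ → ℝ → ℝ) : Prop :=
  ∀ x₁ x₂ y₁ y₂ : ℝ, (x₁ - x₂) * (y₁ - y₂) < 0 →
    S x₁ y₂ + S x₂ y₁ < S x₁ y₁ + S x₂ y₂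

open Set

/-- `y ∈ Σ₊[u](x)`. -/
def IsForwardOptimal (S : ℝ → ℝ → ℝ) (u : ℝ → ℝ) (x y : ℝ) : Prop :=
  ∀ z, u z - S x z ≤ u y - S x y

def IsBackwardOptimal (S : ℝ → ℝ → ℝ) (v : ℝ → ℝ) (z w : ℝ) : Prop :=
  ∀ x, v z + S z w ≤ v x + S x w

section Semiconcave

variable {f : ℝ → ℝ}

theorem Semiconcave1.continuous (hf : Semiconcave1 f) : Continuous f := by
  obtain ⟨C, -, hC⟩ := hf
  have hconv : ConvexOn ℝ univ fun z => C / 2 * z ^ 2 - f z := by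
    refine ⟨convex_univ, fun x _ y _ a b ha hb hab => ?_⟩
    obtain rfl : b = 1 - a := by linarith
    have h := hC x y a ⟨ha, by linarith⟩
    rw [sq_abs] at h
    simp only [smul_eq_mul]
    nlinarith
  have hcont : Continuous fun z => C / 2 * z ^ 2 - (C / 2 * z ^ 2 - f z) :=
    (by fun_prop : Continuous fun z : ℝ => C / 2 * z ^ 2).sub hconv.locallyLipschitz.continuous
  simpa using hcont

theorem Semiconcave1.exists_second_difference_le (hf : Semiconcave1 f) :
    ∃ C, ∀ x t, f (x + t) + f (x - t) - 2 * f x ≤ C * t ^ 2 := by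
  obtain ⟨C, -, hC⟩ := hf
  refine ⟨C, fun x t => ?_⟩
  have h := hC (x + t) (x - t) (1 / 2) ⟨by norm_num, by norm_num⟩
  rw [sq_abs] at h
  ring_nf at h ⊢
  linarith

/-- Semiconcavity makes `t ↦ g₁ (x + t) + g₂ (x - t) + C t²` minimal at `t = 0`. -/
theorem Semiconcave1.eq_of_hasDerivAt_of_isMin {g₁ g₂ : ℝ → ℝ} {x d₁ d₂ : ℝ}
    (hf : Semiconcave1 f) (hd₁ : HasDerivAt g₁ d₁ x) (hd₂ : HasDerivAt g₂ d₂ x)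
    (h₁ : ∀ t, f x + g₁ x ≤ f t + g₁ t) (h₂ : ∀ t, f x + g₂ x ≤ f t + g₂ t) : d₁ = d₂ := by
  obtain ⟨C, hC⟩ := hf.exists_second_difference_le
  set φ : ℝ → ℝ := fun t => g₁ (x + t) - g₁ x + (g₂ (x - t) - g₂ x) + C * t ^ 2
  have hφ_min : IsLocalMin φ 0 := Eventually.of_forall fun t => by
    have := hC x t
    have := h₁ (x + t)
    have := h₂ (x - t)
    simp only [φ, add_zero, sub_zero, sub_self]
    nlinarith
  have hφ : HasDerivAt φ (d₁ + -d₂ + 0) 0 := by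
    refine (((HasDerivAt.comp_const_add x 0 (by simpa using hd₁)).sub_const _).add
      ((HasDerivAt.comp_const_sub x 0 (by simpa using hd₂)).sub_const _)).add ?_
    simpa using (hasDerivAt_pow 2 (0 : ℝ)).const_mul C
  linarith [hφ_min.hasDerivAt_eq_zero hφ]

end Semiconcave

section Cost

variable {S : ℝ → ℝ → ℝ}

theorem DiagPeriodic1.add_one (hdp : DiagPeriodic1 S) (x y : ℝ) : S (x + 1) (y + 1) = S x y := by
  exact_mod_cast hdp 1 x y

theorem DiagPeriodic1.exists_abs_le (hdp : DiagPeriodic1 S)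
    (hS : Continuous fun p : ℝ × ℝ => S p.1 p.2) (r : ℝ) :
    ∃ M, ∀ x y, |x - y| ≤ r → |S x y| ≤ M := by
  obtain ⟨M, hM⟩ := (isCompact_Icc.prod isCompact_Icc :
    IsCompact (Icc (0 : ℝ) 1 ×ˢ Icc (-r) (r + 1))).exists_bound_of_continuousOn hS.continuousOn
  refine ⟨M, fun x y hxy => ?_⟩
  have hshift : S x y = S (x - ⌊x⌋) (y - ⌊x⌋) := by
    simpa using hdp ⌊x⌋ (x - ⌊x⌋) (y - ⌊x⌋)
  rw [abs_le] at hxy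
  have := Int.floor_le x
  have := Int.lt_floor_add_one x
  rw [hshift, ← Real.norm_eq_abs]
  exact hM (x - ⌊x⌋, y - ⌊x⌋) ⟨⟨by linarith, by linarith⟩, by linarith, by linarith⟩

theorem Coercive1.tendsto_cocompact_left (hco : Coercive1 S) (y : ℝ) :
    Tendsto (fun x => S x y) (cocompact ℝ) atTop :=
  tendsto_atTop.2 fun M =>
    let ⟨R, hR⟩ := hco M
    (tendsto_dist_right_cocompact_atTop y).eventually_ge_atTop R |>.mono fun x hx =>
      hR x y (by rwa [← Real.dist_eq])

theorem Coercive1.tendsto_cocompact_right (hco : Coercive1 S) (x : ℝ) :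
    Tendsto (fun y => S x y) (cocompact ℝ) atTop :=
  tendsto_atTop.2 fun M =>
    let ⟨R, hR⟩ := hco M
    (tendsto_dist_right_cocompact_atTop x).eventually_ge_atTop R |>.mono fun y hy =>
      hR x y (by rwa [← Real.dist_eq, dist_comm])

theorem Ferromagnetic1.hasDerivAt_deriv_left (hfer : Ferromagnetic1 S) (x y : ℝ) :
    HasDerivAt (fun t => S t y) (deriv (fun t => S t y) x) x :=
  ((hfer.1.differentiable one_ne_zero).comp
    (differentiable_id.prodMk (differentiable_const y)) x).hasDerivAt

theorem Ferromagnetic1.injective_deriv_left (hfer : Ferromagnetic1 S) (x : ℝ) :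
    Function.Injective fun y => deriv (fun t => S t y) x := by
  obtain ⟨h, hh⟩ := hfer.2.1 x
  intro y₁ y₂ heq
  exact h.injective (by simpa only [hh] using heq)

end Cost

section Tminus

variable {S : ℝ → ℝ → ℝ} {v : ℝ → ℝ}

theorem IsBackwardOptimal.Tminus_eq {z w : ℝ} (h : IsBackwardOptimal S v z w) :
    Tminus S v w = v z + S z w :=
  le_antisymm (ciInf_le ⟨v z + S z w, by rintro _ ⟨x, rfl⟩; exact h x⟩ z) (le_ciInf h)

theorem Tminus_le (hmin : ∀ w, ∃ z, IsBackwardOptimal S v z w) (x w : ℝ) :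
    Tminus S v w ≤ v x + S x w := by
  obtain ⟨z, hz⟩ := hmin w
  exact hz.Tminus_eq ▸ hz x

theorem IsBackwardOptimal.isForwardOptimal (hmin : ∀ w, ∃ z, IsBackwardOptimal S v z w)
    {z w : ℝ} (h : IsBackwardOptimal S v z w) : IsForwardOptimal S (Tminus S v) z w := fun t => by
  linarith [Tminus_le hmin z t, h.Tminus_eq]

theorem Tminus_periodic (hdp : DiagPeriodic1 S) (hvp : Periodic1 v) : Periodic1 (Tminus S v) :=
  fun w => by
    have hv1 : ∀ x, v (x + 1) = v x := hvp
    simp only [Tminus]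
    rw [← (Equiv.addRight (1 : ℝ)).iInf_comp]
    simp only [Equiv.coe_addRight, hv1, hdp.add_one]

theorem exists_isBackwardOptimal (hS : Continuous fun p : ℝ × ℝ => S p.1 p.2) (hco : Coercive1 S)
    (hvc : Continuous v) (hvb : BddBelow (range v)) (w : ℝ) : ∃ z, IsBackwardOptimal S v z w := by
  obtain ⟨b, hb⟩ := hvb
  have hSw : Continuous fun x => S x w := hS.comp (continuous_id.prodMk continuous_const)
  exact (hvc.add hSw).exists_forall_le
    (tendsto_atTop_add_left_of_le _ b (fun x => hb ⟨x, rfl⟩) (hco.tendsto_cocompact_left w))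

theorem exists_abs_sub_le_of_isBackwardOptimal (hS : Continuous fun p : ℝ × ℝ => S p.1 p.2)
    (hco : Coercive1 S) (hdp : DiagPeriodic1 S) (hvb : BddBelow (range v))
    (hva : BddAbove (range v)) : ∃ R, ∀ z w, IsBackwardOptimal S v z w → |z - w| ≤ R := by
  obtain ⟨a, ha⟩ := hvb
  obtain ⟨b, hb⟩ := hva
  obtain ⟨A, hA⟩ := hdp.exists_abs_le hS 0
  obtain ⟨R, hR⟩ := hco (b - a + A + 1)
  refine ⟨R, fun z w h => ?_⟩
  by_contra! hlt
  have := hR z w hlt.le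
  have := h w
  have := (abs_le.1 (hA w w (by simp))).2
  have := ha ⟨z, rfl⟩
  have := hb ⟨w, rfl⟩
  linarith

/-- Since minimizers lie within distance `R`, `Tminus S v w` is the minimum over the fixed compact
set `t ∈ [-R, R]` of the jointly continuous `v (w + t) + S (w + t) w`. -/
theorem continuous_Tminus (hS : Continuous fun p : ℝ × ℝ => S p.1 p.2) (hvc : Continuous v)
    (hmin : ∀ w, ∃ z, IsBackwardOptimal S v z w) {R : ℝ}
    (hR : ∀ z w, IsBackwardOptimal S v z w → |z - w| ≤ R) : Continuous (Tminus S v) := by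
  have hK : IsCompact (Icc (-R) R) := isCompact_Icc
  have hf : Continuous fun p : ℝ × ℝ => v (p.1 + p.2) + S (p.1 + p.2) p.1 := by
    have := hS.comp (by fun_prop : Continuous fun p : ℝ × ℝ => (p.1 + p.2, p.1))
    exact (hvc.comp (by fun_prop)).add this
  convert hK.continuous_sInf (f := fun w t => v (w + t) + S (w + t) w) hf using 1
  funext w
  refine (IsLeast.csInf_eq ⟨?_, ?_⟩).symm
  · obtain ⟨z, hz⟩ := hmin w
    exact ⟨z - w, abs_le.1 (hR z w hz), by simp [hz.Tminus_eq]⟩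
  · rintro _ ⟨t, -, rfl⟩
    exact Tminus_le hmin _ w

end Tminus

section ForwardOptimal

variable {S : ℝ → ℝ → ℝ} {u : ℝ → ℝ}

theorem exists_isForwardOptimal (hS : Continuous fun p : ℝ × ℝ => S p.1 p.2) (hco : Coercive1 S)
    (huc : Continuous u) (hua : BddAbove (range u)) (x : ℝ) : ∃ y, IsForwardOptimal S u x y := by
  obtain ⟨b, hb⟩ := hua
  have hf : Continuous fun z => S x z - u z :=
    (hS.comp (continuous_const.prodMk continuous_id)).sub huc
  have hlim : Tendsto (fun z => S x z - u z) (cocompact ℝ) atTop := by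
    simpa only [sub_eq_add_neg] using tendsto_atTop_add_right_of_le _ (-b)
      (hco.tendsto_cocompact_right x) fun z => neg_le_neg (hb ⟨z, rfl⟩)
  obtain ⟨y, hy⟩ := hf.exists_forall_le hlim
  exact ⟨y, fun z => by linarith [hy z]⟩

theorem IsForwardOptimal.le_of_lt (hnc : NonCrossing S) {x₁ x₂ y₁ y₂ : ℝ}
    (h₁ : IsForwardOptimal S u x₁ y₁) (h₂ : IsForwardOptimal S u x₂ y₂) (hx : x₁ < x₂) :
    y₁ ≤ y₂ := by
  by_contra! hy
  have := hnc x₁ x₂ y₁ y₂ (mul_neg_of_neg_of_pos (sub_neg.2 hx) (sub_pos.2 hy))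
  linarith [h₁ y₂, h₂ y₁]

theorem IsForwardOptimal.add_one (hup : Periodic1 u) (hdp : DiagPeriodic1 S) {x y : ℝ}
    (h : IsForwardOptimal S u x y) : IsForwardOptimal S u (x + 1) (y + 1) := fun z => by
  have := h (z - 1)
  rwa [← hdp.add_one x, ← hdp.add_one x y, ← hup, ← hup y, sub_add_cancel] at this

end ForwardOptimal

section Uniqueness

variable {S : ℝ → ℝ → ℝ} {v : ℝ → ℝ}

theorem isBackwardOptimal_of_mem_Ioo (hnc : NonCrossing S)
    (hmin : ∀ w, ∃ z, IsBackwardOptimal S v z w) {x y₁ y₂ w : ℝ}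
    (h₁ : IsForwardOptimal S (Tminus S v) x y₁) (h₂ : IsForwardOptimal S (Tminus S v) x y₂)
    (hw : w ∈ Ioo y₁ y₂) : IsBackwardOptimal S v x w := by
  obtain ⟨z, hz⟩ := hmin w
  have hzw := hz.isForwardOptimal hmin
  obtain rfl : z = x := by
    by_contra! hne
    rcases hne.lt_or_gt with hlt | hgt
    · exact (hzw.le_of_lt hnc h₁ hlt).not_gt hw.1
    · exact (h₂.le_of_lt hnc hzw hgt).not_gt hw.2
  exact hz

theorem IsForwardOptimal.unique (hfer : Ferromagnetic1 S) (hnc : NonCrossing S)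
    (hv : Semiconcave1 v) (hmin : ∀ w, ∃ z, IsBackwardOptimal S v z w) {x y₁ y₂ : ℝ}
    (h₁ : IsForwardOptimal S (Tminus S v) x y₁) (h₂ : IsForwardOptimal S (Tminus S v) x y₂) :
    y₁ = y₂ := by
  by_contra hne
  wlog hlt : y₁ < y₂ generalizing y₁ y₂
  · exact this h₂ h₁ (Ne.symm hne) ((Ne.symm hne).lt_of_le (not_lt.1 hlt))
  have hx₁ := isBackwardOptimal_of_mem_Ioo (w := (2 * y₁ + y₂) / 3) hnc hmin h₁ h₂
    ⟨by linarith, by linarith⟩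
  have hx₂ := isBackwardOptimal_of_mem_Ioo (w := (y₁ + 2 * y₂) / 3) hnc hmin h₁ h₂
    ⟨by linarith, by linarith⟩
  have hslope := hv.eq_of_hasDerivAt_of_isMin (hfer.hasDerivAt_deriv_left x _)
    (hfer.hasDerivAt_deriv_left x _) hx₁ hx₂
  linarith [hfer.injective_deriv_left x hslope]

end Uniqueness

theorem optimal_forward_map_lift_general (S : ℝ → ℝ → ℝ)
    (hS : Continuous fun p : ℝ × ℝ => S p.1 p.2)
    (hco : Coercive1 S) (hdp : DiagPeriodic1 S)
    (hfer : Ferromagnetic1 S) (hnc : NonCrossing S)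
    (v u : ℝ → ℝ) (hvp : Periodic1 v) (hv : Semiconcave1 v)
    (hu : u = Tminus S v) :
    ∃ σ : ℝ → ℝ,
      (∀ x z, u z - S x z ≤ u (σ x) - S x (σ x)) ∧
      (∀ x y, (∀ z, u z - S x z ≤ u y - S x y) → y = σ x) ∧
      Continuous σ ∧ Monotone σ ∧ ∀ x, σ (x + 1) = σ x + 1 := by
  subst hu
  have hvc := hv.continuous
  obtain ⟨hvb, hva⟩ := isBounded_iff_bddBelow_bddAbove.1 <|
    Function.Periodic.isBounded_of_continuous hvp one_ne_zero hvc
  have hmin := exists_isBackwardOptimal hS hco hvc hvb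
  obtain ⟨R, hR⟩ := exists_abs_sub_le_of_isBackwardOptimal hS hco hdp hvb hva
  have huc := continuous_Tminus hS hvc hmin hR
  have hup := Tminus_periodic hdp hvp
  have hua := (Function.Periodic.isBounded_of_continuous hup one_ne_zero huc).bddAbove
  choose σ hσ using exists_isForwardOptimal hS hco huc hua
  have hσ_unique : ∀ x y, IsForwardOptimal S (Tminus S v) x y → y = σ x :=
    fun x y hy => hy.unique hfer hnc hv hmin (hσ x)
  have hσ_mono : Monotone σ :=
    monotone_iff_forall_lt.2 fun a b hlt => (hσ a).le_of_lt hnc (hσ b) hlt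
  have hσ_surj : Function.Surjective σ := fun w => by
    obtain ⟨z, hz⟩ := hmin w
    exact ⟨z, (hσ_unique z w (hz.isForwardOptimal hmin)).symm⟩
  exact ⟨σ, hσ, hσ_unique, hσ_mono.continuous_of_surjective hσ_surj, hσ_mono,
    fun x => (hσ_unique _ _ ((hσ x).add_one hup hdp)).symm⟩

/-- The optimal forward map of u = T⁻[v] is a single-valued continuous
non-decreasing lift of a degree-one circle map. -/
theorem optimal_forward_map_lift (S : ℝ → ℝ → ℝ)
    (hS : Continuous fun p : ℝ × ℝ => S p.1 p.2)
    (hco : Coercive1 S) (hdp : DiagPeriodic1 S)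
    (hlsc : LocallySemiconcave fun p : ℝ × ℝ => S p.1 p.2)
    (hfer : Ferromagnetic1 S) (hnc : NonCrossing S)
    (v u : ℝ → ℝ) (hvp : Periodic1 v) (hv : Semiconcave1 v)
    (hu : u = Tminus S v) :
    ∃ σ : ℝ → ℝ,
      (∀ x z, u z - S x z ≤ u (σ x) - S x (σ x)) ∧
      (∀ x y, (∀ z, u z - S x z ≤ u y - S x y) → y = σ x) ∧
      Continuous σ ∧ Monotone σ ∧ ∀ x, σ (x + 1) = σ x + 1 :=
  optimal_forward_map_lift_general S hS hco hdp hfer hnc v u hvp hv hu
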